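/- (Theorem 1, lower bound, 1-D case) Let μ range over a closed interval [m₁,m₂] and σ over {σ₁, σ₂} ⊆ (0,∞) with σ₁ ≤ σ₂. Let [a,b] be a closed interval with midpoint c and let z̄ be the point of [m₁,m₂] farthest from c. Then for all μ ∈ [m₁,m₂] and all σ ∈ [σ₁,σ₂], h([a,b], μ, σ) ≥ min(h([a,b], z̄, σ₁), h([a,b], z̄, σ₂)). -/

import Mathlib

open MeasureTheory ProbabilityTheory Real Set

noncomputable def erf (x : ℝ) : ℝ := (2 / Real.sqrt Real.pi) * ∫ t in (0:ℝ)..x, Real.exp (-t^2)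

noncomputable def h (a b μ σ : ℝ) : ℝ :=
  (1/2) * (erf ((b - μ) / Real.sqrt (2*σ)) - erf ((a - μ) / Real.sqrt (2*σ)))

/-!
Write `c = (a + b) / 2`. In the mean, `h` is symmetric under `μ ↦ a + b - μ` (oddness of `erf`),
and for `μ ≥ c` its derivative compares the Gaussian density at `a` and at `b`, which is `≤ 0`
since `b` is then the closer endpoint; so `h` only decreases as `|μ - c|` grows, and `zbar` is the
worst mean. In the variance, put `t = 1 / √(2σ)`, `A = a - μ`, `B = b - μ`, so that
`2 h = erf (B t) - erf (A t)`. Its `t`-derivative has the sign of `B exp (-(B t)²) - A exp (-(A t)²)`,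
which, once positive, stays nonnegative for all smaller `t ≥ 0`: as a function of `t`, `h` first
rises and then falls, so on `[σ₁, σ₂]` it is bounded below by its value at one of the endpoints.
-/

theorem min_le_of_hasDerivAt_single_crossing {f f' : ℝ → ℝ} {x y z : ℝ}
    (hf : ∀ t ∈ Icc x y, HasDerivAt f (f' t) t)
    (hcross : ∀ s ∈ Icc x y, ∀ t ∈ Icc x y, s ≤ t → 0 < f' t → 0 ≤ f' s)
    (hz : z ∈ Icc x y) : min (f x) (f y) ≤ f z := by
  have hderiv : ∀ {p q}, Icc p q ⊆ Icc x y → ∀ t ∈ interior (Icc p q),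
      HasDerivWithinAt f (f' t) (interior (Icc p q)) t := fun hsub t ht =>
    (hf t (hsub (interior_subset ht))).hasDerivWithinAt
  have hcont : ∀ {p q}, Icc p q ⊆ Icc x y → ContinuousOn f (Icc p q) := fun hsub t ht =>
    (hf t (hsub ht)).continuousAt.continuousWithinAt
  have hleft : Icc x z ⊆ Icc x y := Icc_subset_Icc_right hz.2
  have hright : Icc z y ⊆ Icc x y := Icc_subset_Icc_left hz.1
  by_cases hpos : ∃ t ∈ Icc z y, 0 < f' t
  · obtain ⟨t, ht, hft⟩ := hpos
    have hmono : MonotoneOn f (Icc x z) :=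
      monotoneOn_of_hasDerivWithinAt_nonneg (convex_Icc x z) (hcont hleft) (hderiv hleft)
        fun s hs => hcross s (hleft (interior_subset hs)) t (hright ht)
          ((interior_subset hs).2.trans ht.1) hft
    exact min_le_of_left_le (hmono (left_mem_Icc.2 hz.1) (right_mem_Icc.2 hz.1) hz.1)
  · push Not at hpos
    have hanti : AntitoneOn f (Icc z y) :=
      antitoneOn_of_hasDerivWithinAt_nonpos (convex_Icc z y) (hcont hright) (hderiv hright)
        fun s hs => hpos s (interior_subset hs)
    exact min_le_of_right_le (hanti (left_mem_Icc.2 hz.2) (right_mem_Icc.2 hz.2) hz.2)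

theorem hasDerivAt_erf (x : ℝ) : HasDerivAt erf (2 / √π * exp (-x ^ 2)) x :=
  ((continuous_id.pow 2).neg.rexp.integral_hasStrictDerivAt 0 x).hasDerivAt.const_mul _

theorem erf_neg (x : ℝ) : erf (-x) = -erf x := by
  have heven := intervalIntegral.integral_comp_neg (a := 0) (b := x) (fun t => exp (-t ^ 2))
  simp only [neg_sq, neg_zero] at heven
  have hodd : ∫ t in (0 : ℝ)..(-x), exp (-t ^ 2) = -∫ t in (0 : ℝ)..x, exp (-t ^ 2) := by
    rw [heven, intervalIntegral.integral_symm]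
  rw [erf, erf, hodd, mul_neg]

theorem exp_neg_mul_sq_mul_le_of_le {A B s t : ℝ} (hAB : A ≤ B) (hs : 0 ≤ s) (hst : s ≤ t)
    (hcmp : exp (-(A * t) ^ 2) * A ≤ exp (-(B * t) ^ 2) * B) :
    exp (-(A * s) ^ 2) * A ≤ exp (-(B * s) ^ 2) * B := by
  have hd : 0 ≤ t ^ 2 - s ^ 2 := by nlinarith
  have hsplit : ∀ C : ℝ,
      exp (-(C * s) ^ 2) * C = exp (-(C * t) ^ 2) * C * exp (C ^ 2 * (t ^ 2 - s ^ 2)) := by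
    intro C
    rw [mul_right_comm, ← exp_add]
    ring_nf
  rcases le_or_gt A 0 with hA | hA
  · rcases le_or_gt 0 B with hB | hB
    · exact (mul_nonpos_of_nonneg_of_nonpos (exp_nonneg _) hA).trans
        (mul_nonneg (exp_nonneg _) hB)
    · rw [hsplit A, hsplit B]
      calc _ ≤ exp (-(B * t) ^ 2) * B * exp (A ^ 2 * (t ^ 2 - s ^ 2)) := by gcongr
        _ ≤ _ := mul_le_mul_of_nonpos_left
            (exp_le_exp.2 (mul_le_mul_of_nonneg_right (by nlinarith) hd))
            (mul_nonpos_of_nonneg_of_nonpos (exp_nonneg _) hB.le)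
  · rw [hsplit A, hsplit B]
    calc _ ≤ exp (-(A * t) ^ 2) * A * exp (B ^ 2 * (t ^ 2 - s ^ 2)) := by gcongr
      _ ≤ _ := by gcongr

theorem min_le_erf_mul_sub_erf_mul {A B x y t : ℝ} (hAB : A ≤ B) (hx : 0 ≤ x)
    (ht : t ∈ Icc x y) :
    min (erf (B * x) - erf (A * x)) (erf (B * y) - erf (A * y)) ≤ erf (B * t) - erf (A * t) := by
  have hderiv : ∀ τ, HasDerivAt (fun τ => erf (B * τ) - erf (A * τ))
      (2 / √π * (exp (-(B * τ) ^ 2) * B - exp (-(A * τ) ^ 2) * A)) τ := fun τ =>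
    (((hasDerivAt_erf _).comp τ (hasDerivAt_const_mul B)).sub
      ((hasDerivAt_erf _).comp τ (hasDerivAt_const_mul A))).congr_deriv (by ring)
  have hc : 0 < 2 / √π := by positivity
  refine min_le_of_hasDerivAt_single_crossing (fun τ _ => hderiv τ) ?_ ht
  intro r hr τ _ hrτ hpos
  have hcmp := sub_pos.1 ((mul_pos_iff_of_pos_left hc).1 hpos)
  exact mul_nonneg hc.le (sub_nonneg.2
    (exp_neg_mul_sq_mul_le_of_le hAB (hx.trans hr.1) hrτ hcmp.le))

theorem h_add_sub_mean (a b μ σ : ℝ) : h a b (a + b - μ) σ = h a b μ σ := by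
  rw [h, h, show b - (a + b - μ) = -(a - μ) by ring, show a - (a + b - μ) = -(b - μ) by ring,
    neg_div, neg_div, erf_neg, erf_neg]
  ring

theorem h_antitoneOn_mean {a b : ℝ} (hab : a ≤ b) (σ : ℝ) :
    AntitoneOn (fun μ => h a b μ σ) (Ici ((a + b) / 2)) := by
  set s := √(2 * σ)
  have hderiv : ∀ μ, HasDerivAt (fun μ => h a b μ σ)
      (1 / (√π * s) * (exp (-((a - μ) / s) ^ 2) - exp (-((b - μ) / s) ^ 2))) μ := fun μ =>
    ((((hasDerivAt_erf _).comp μ (((hasDerivAt_id' μ).const_sub b).div_const s)).sub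
      ((hasDerivAt_erf _).comp μ (((hasDerivAt_id' μ).const_sub a).div_const s))).const_mul
        (1 / 2 : ℝ)).congr_deriv (by ring)
  refine antitoneOn_of_hasDerivWithinAt_nonpos (convex_Ici _)
    (fun μ _ => (hderiv μ).continuousAt.continuousWithinAt)
    (fun μ _ => (hderiv μ).hasDerivWithinAt) fun μ hμ => ?_
  rw [interior_Ici, mem_Ioi] at hμ
  have hsq : ((b - μ) / s) ^ 2 ≤ ((a - μ) / s) ^ 2 := by
    rw [div_pow, div_pow]
    exact div_le_div_of_nonneg_right (by nlinarith) (sq_nonneg _)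
  exact mul_nonpos_of_nonneg_of_nonpos (by positivity)
    (sub_nonpos.2 (exp_le_exp.2 (neg_le_neg hsq)))

theorem h_le_h_of_abs_sub_le {a b μ z : ℝ} (hab : a ≤ b) (σ : ℝ)
    (hd : |μ - (a + b) / 2| ≤ |z - (a + b) / 2|) : h a b z σ ≤ h a b μ σ := by
  have hfold : ∀ w, h a b w σ = h a b ((a + b) / 2 + |w - (a + b) / 2|) σ := by
    intro w
    rcases abs_cases (w - (a + b) / 2) with ⟨hw, _⟩ | ⟨hw, _⟩
    · rw [hw, add_sub_cancel]
    · rw [hw, ← h_add_sub_mean a b w σ]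
      ring_nf
  rw [hfold z, hfold μ]
  exact h_antitoneOn_mean hab σ (mem_Ici.2 (le_add_of_nonneg_right (abs_nonneg _)))
    (mem_Ici.2 (le_add_of_nonneg_right (abs_nonneg _))) (add_le_add_right hd _)

theorem min_le_h_of_mem_Icc {a b μ σ₁ σ₂ σ : ℝ} (hab : a ≤ b) (h1 : 0 < σ₁)
    (hσ : σ ∈ Icc σ₁ σ₂) : min (h a b μ σ₁) (h a b μ σ₂) ≤ h a b μ σ := by
  have hrepr : ∀ τ, h a b μ τ =
      1 / 2 * (erf ((b - μ) * (√(2 * τ))⁻¹) - erf ((a - μ) * (√(2 * τ))⁻¹)) := fun τ => by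
    simp only [h, div_eq_mul_inv]
  have hinv : ∀ {τ τ'}, 0 < τ → τ ≤ τ' → (√(2 * τ'))⁻¹ ≤ (√(2 * τ))⁻¹ := fun hτ hττ' =>
    inv_anti₀ (sqrt_pos.2 (by linarith)) (sqrt_le_sqrt (by linarith))
  have hquasi := min_le_erf_mul_sub_erf_mul (A := a - μ) (B := b - μ) (by linarith)
    (by positivity) ⟨hinv (h1.trans_le hσ.1) hσ.2, hinv h1 hσ.1⟩
  rw [min_comm, hrepr, hrepr, hrepr, ← mul_min_of_nonneg _ _ (by norm_num)]
  gcongr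

theorem stmt12_general (a b m₁ m₂ σ₁ σ₂ c zbar : ℝ) (hab : a ≤ b)
    (h1 : 0 < σ₁) (hc : c = (a + b) / 2)
    (hz : zbar = if |m₂ - c| ≤ |m₁ - c| then m₁ else m₂) :
    ∀ μ ∈ Set.Icc m₁ m₂, ∀ σ ∈ Set.Icc σ₁ σ₂,
      min (h a b zbar σ₁) (h a b zbar σ₂) ≤ h a b μ σ := by
  intro μ hμ σ hσ
  have hzbar : |zbar - c| = max |m₂ - c| |m₁ - c| := by
    rw [hz, max_def]
    split_ifs <;> rfl
  have hfar : |μ - c| ≤ |zbar - c| := by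
    rw [hzbar, max_comm]
    exact abs_le_max_abs_abs (sub_le_sub_right hμ.1 c) (sub_le_sub_right hμ.2 c)
  subst hc
  exact (min_le_h_of_mem_Icc hab h1 hσ).trans (h_le_h_of_abs_sub_le hab σ hfar)

theorem stmt12 (a b m₁ m₂ σ₁ σ₂ c zbar : ℝ) (hab : a ≤ b) (hm : m₁ ≤ m₂)
    (h1 : 0 < σ₁) (h12 : σ₁ ≤ σ₂) (hc : c = (a + b) / 2)
    (hz : zbar = if |m₂ - c| ≤ |m₁ - c| then m₁ else m₂) :
    ∀ μ ∈ Set.Icc m₁ m₂, ∀ σ ∈ Set.Icc σ₁ σ₂,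
      min (h a b zbar σ₁) (h a b zbar σ₂) ≤ h a b μ σ :=
  stmt12_general a b m₁ m₂ σ₁ σ₂ c zbar hab h1 hc hz
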